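/- arXiv:2307.03488 — 3 statements merged into one kernel-verified Lean document; each statement's English description precedes it below -/
import Mathlib

section
/- Let p, q, r be points in the plane with x_p ≠ x_q and x_p ≠ x_r. Then r lies on or inside the circle C_{p,q} (i.e., dist((x_{p,q},0), r) ≤ dist((x_{p,q},0), p)) if and only if either (i) x_p < x_r and x_{p,q} ≥ x_{p,r}, or (ii) x_p > x_r and x_{p,q} ≤ x_{p,r}. -/
/-- The point of the plane with coordinates `(a, b)`. -/
noncomputable def pt (a b : ℝ) : EuclideanSpace ℝ (Fin 2) :=
  (WithLp.equiv 2 (Fin 2 → ℝ)).symm ![a, b]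

/-- For two points `a`, `b` of the plane with `x_a ≠ x_b`, the `x`-coordinate
`x_{a,b} = (y_b² − y_a²)/(2(x_b − x_a)) + (x_a + x_b)/2` of the center, on the
`x`-axis, of the circle `C_{a,b}` passing through `a` and `b`. -/
noncomputable def xc (a b : EuclideanSpace ℝ (Fin 2)) : ℝ :=
  ((b 1) ^ 2 - (a 1) ^ 2) / (2 * (b 0 - a 0)) + (a 0 + b 0) / 2

/-- Given three points `p, q, r` with `x_p ≠ x_q` and `x_p ≠ x_r`, the point `r`
lies on or inside the circle `C_{p,q}` if and only if either
(i) `x_p < x_r` and `x_{p,q} ≥ x_{p,r}`, or (ii) `x_p > x_r` and `x_{p,q} ≤ x_{p,r}`. -/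
theorem stmt_2 (p q r : EuclideanSpace ℝ (Fin 2))
    (hpq : p 0 ≠ q 0) (hpr : p 0 ≠ r 0) :
    dist (pt (xc p q) 0) r ≤ dist (pt (xc p q) 0) p ↔
      (p 0 < r 0 ∧ xc p r ≤ xc p q) ∨ (r 0 < p 0 ∧ xc p q ≤ xc p r) := by
  have hsub : r 0 - p 0 ≠ 0 := sub_ne_zero.mpr (Ne.symm hpr)
  have hd : ∀ x : EuclideanSpace ℝ (Fin 2),
      dist (pt (xc p q) 0) x ^ 2 = (xc p q - x 0) ^ 2 + (x 1) ^ 2 := by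
    intro x
    rw [EuclideanSpace.dist_eq, Real.sq_sqrt (by positivity)]
    simp [Fin.sum_univ_two, pt, Real.dist_eq, sq_abs, sub_sq]
  have key : dist (pt (xc p q) 0) r ^ 2 - dist (pt (xc p q) 0) p ^ 2
      = 2 * (r 0 - p 0) * (xc p r - xc p q) := by
    rw [hd, hd]
    unfold xc
    field_simp
    ring
  have hiff : dist (pt (xc p q) 0) r ≤ dist (pt (xc p q) 0) p ↔
      2 * (r 0 - p 0) * (xc p r - xc p q) ≤ 0 := by
    rw [show (dist (pt (xc p q) 0) r ≤ dist (pt (xc p q) 0) p) ↔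
        dist (pt (xc p q) 0) r ^ 2 ≤ dist (pt (xc p q) 0) p ^ 2 from
      (pow_le_pow_iff_left₀ dist_nonneg dist_nonneg two_ne_zero).symm,
      ← sub_nonpos, key]
  rw [hiff]
  rcases lt_or_gt_of_ne hpr with h | h
  · constructor
    · intro hle
      exact Or.inl ⟨h, by nlinarith⟩
    · rintro (⟨_, hle⟩ | ⟨h', _⟩)
      · nlinarith
      · exact absurd h (not_lt.mpr h'.le)
  · constructor
    · intro hle
      exact Or.inr ⟨h, by nlinarith⟩
    · rintro (⟨h', _⟩ | ⟨_, hle⟩)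
      · exact absurd h' (not_lt.mpr h.le)
      · nlinarith
end

section
/- Let p be a point in the plane and let R be a finite set of points such that every r ∈ R satisfies x_r ≠ x_p, and let q be a point with x_q ≠ x_p. Then the number of points of R lying on or inside the circle C_{p,q} equals the number of r ∈ R with x_r > x_p and x_{p,r} ≤ x_{p,q}, plus the number of r ∈ R with x_r < x_p and x_{p,r} ≥ x_{p,q}. -/
open scoped Classical

/-!
The center `(c, 0)` of `C_{p,q}` is closer to `r` than to `p` iff `c` lies on the side of
`x_{p,r}` facing `r`: the squared distances from `(c, 0)` to `r` and to `p` differ by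
`‖r‖² - ‖p‖² - 2c(x_r - x_p)`, and `2(x_r - x_p) x_{p,r} = ‖r‖² - ‖p‖²`.  So the disc
condition on `r` splits, according to the sign of `x_r - x_p`, into the two disjoint
conditions counted on the right-hand side.
-/

lemma dist_pt (a b : ℝ) (s : EuclideanSpace ℝ (Fin 2)) :
    dist (pt a b) s = Real.sqrt ((a - s 0) ^ 2 + (b - s 1) ^ 2) := by
  rw [EuclideanSpace.dist_eq, Fin.sum_univ_two]
  simp [pt, Real.dist_eq, sq_abs]

lemma two_mul_sub_mul_xc (p r : EuclideanSpace ℝ (Fin 2)) (h : r 0 ≠ p 0) :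
    2 * (r 0 - p 0) * xc p r = r 0 ^ 2 + r 1 ^ 2 - (p 0 ^ 2 + p 1 ^ 2) := by
  have : r 0 - p 0 ≠ 0 := sub_ne_zero.2 h
  unfold xc
  field_simp
  ring

lemma dist_pt_le_dist_pt_iff_mul_xc_le (c : ℝ) (p r : EuclideanSpace ℝ (Fin 2))
    (hr : r 0 ≠ p 0) :
    dist (pt c 0) r ≤ dist (pt c 0) p ↔ (r 0 - p 0) * xc p r ≤ (r 0 - p 0) * c := by
  rw [dist_pt, dist_pt, Real.sqrt_le_sqrt_iff (by positivity)]
  have hxc := two_mul_sub_mul_xc p r hr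
  constructor <;> intro h <;> nlinarith

lemma dist_pt_le_dist_pt_iff (c : ℝ) (p r : EuclideanSpace ℝ (Fin 2)) (hr : r 0 ≠ p 0) :
    dist (pt c 0) r ≤ dist (pt c 0) p ↔
      (p 0 < r 0 ∧ xc p r ≤ c) ∨ (r 0 < p 0 ∧ c ≤ xc p r) := by
  rw [dist_pt_le_dist_pt_iff_mul_xc_le c p r hr]
  rcases hr.lt_or_gt with hlt | hgt
  · have hneg : r 0 - p 0 < 0 := sub_neg.2 hlt
    simp only [mul_le_mul_left_of_neg hneg, hlt, true_and, hlt.not_gt, false_and, false_or]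
  · have hpos : 0 < r 0 - p 0 := sub_pos.2 hgt
    simp only [mul_le_mul_iff_right₀ hpos, hgt, true_and, hgt.not_gt, false_and, or_false]

theorem stmt_3_general (p q : EuclideanSpace ℝ (Fin 2))
    (R : Finset (EuclideanSpace ℝ (Fin 2)))
    (hR : ∀ r ∈ R, r 0 ≠ p 0) :
    (R.filter fun r => dist (pt (xc p q) 0) r ≤ dist (pt (xc p q) 0) p).card =
      (R.filter fun r => p 0 < r 0 ∧ xc p r ≤ xc p q).card +
        (R.filter fun r => r 0 < p 0 ∧ xc p q ≤ xc p r).card := by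
  rw [Finset.filter_congr fun r hr => dist_pt_le_dist_pt_iff (xc p q) p r (hR r hr),
    Finset.filter_or, Finset.card_union_of_disjoint]
  exact Finset.disjoint_filter.2 fun r _ ⟨hgt, _⟩ ⟨hlt, _⟩ => hgt.not_gt hlt

/-- Let `p` be a point, `R` a finite set of points all of whose `x`-coordinates
differ from `x_p`, and `q` a point with `x_q ≠ x_p`.  Then the number of points of
`R` lying on or inside the circle `C_{p,q}` equals the number of `r ∈ R` with
`x_r > x_p` and `x_{p,r} ≤ x_{p,q}`, plus the number of `r ∈ R` with `x_r < x_p`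
and `x_{p,r} ≥ x_{p,q}`. -/
theorem stmt_3 (p q : EuclideanSpace ℝ (Fin 2))
    (R : Finset (EuclideanSpace ℝ (Fin 2)))
    (hR : ∀ r ∈ R, r 0 ≠ p 0) (hq : q 0 ≠ p 0) :
    (R.filter fun r => dist (pt (xc p q) 0) r ≤ dist (pt (xc p q) 0) p).card =
      (R.filter fun r => p 0 < r 0 ∧ xc p r ≤ xc p q).card +
        (R.filter fun r => r 0 < p 0 ∧ xc p q ≤ xc p r).card :=
  stmt_3_general p q R hR
end

section
/- Let B and R be disjoint finite sets (blue and red points), let δ < 0, and let w assign weight δ to every point of R and a weight strictly greater than −|R|·δ to every point of B. Then for any subsets S, T ⊆ B ∪ R such that B ⊆ S and B ⊄ T (some blue point is missing from T), the total weight of S is strictly greater than the total weight of T: Σ_{p∈S} w(p) > Σ_{p∈T} w(p). Hence every optimal solution of the weighted problem covers all blue points. -/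
/-- AllBlue-MinRed weighting: `B` (blue) and `R` (red) are disjoint finite sets,
`δ < 0`, every red point has weight `δ` and every blue point has weight strictly
greater than `−|R|·δ`.  Then for subsets `S, T ⊆ B ∪ R` with `B ⊆ S` and `B ⊄ T`,
the total weight of `S` is strictly greater than that of `T`; hence every optimal
solution covers all blue points. -/
theorem stmt_10 {α : Type*} [DecidableEq α] (B R : Finset α) (hBR : Disjoint B R)
    (δ : ℝ) (hδ : δ < 0) (w : α → ℝ)
    (hwR : ∀ p ∈ R, w p = δ) (hwB : ∀ p ∈ B, w p > -(R.card : ℝ) * δ)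
    (S T : Finset α) (hS : S ⊆ B ∪ R) (hT : T ⊆ B ∪ R)
    (hBS : B ⊆ S) (hBT : ¬ B ⊆ T) :
    ∑ p ∈ T, w p < ∑ p ∈ S, w p := by
  obtain ⟨b, hbB, hbT⟩ := Finset.not_subset.mp hBT
  have hwBnn : ∀ p ∈ B, 0 ≤ w p := fun p hp => le_of_lt <| lt_of_le_of_lt
    (by nlinarith [Nat.cast_nonneg (α := ℝ) R.card]) (hwB p hp)
  -- decompose S
  have hSdec : S = B ∪ (S ∩ R) := by
    ext x
    simp only [Finset.mem_union, Finset.mem_inter]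
    constructor
    · intro hx
      rcases Finset.mem_union.mp (hS hx) with h | h
      · exact Or.inl h
      · exact Or.inr ⟨hx, h⟩
    · rintro (h | ⟨h, _⟩)
      · exact hBS h
      · exact h
  have hdisjS : Disjoint B (S ∩ R) :=
    hBR.mono_right (Finset.inter_subset_right)
  have hsumS : ∑ p ∈ S, w p = (∑ p ∈ B, w p) + ∑ p ∈ S ∩ R, w p := by
    conv_lhs => rw [hSdec, Finset.sum_union hdisjS]
  have hSR : ∑ p ∈ S ∩ R, w p = ((S ∩ R).card : ℝ) * δ := by
    rw [Finset.sum_congr rfl (fun p hp => hwR p (Finset.mem_inter.mp hp).2)]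
    simp [mul_comm]
  have hSRge : ((R.card : ℝ)) * δ ≤ ∑ p ∈ S ∩ R, w p := by
    rw [hSR]
    have hcard : (S ∩ R).card ≤ R.card :=
      Finset.card_le_card Finset.inter_subset_right
    have : ((S ∩ R).card : ℝ) ≤ (R.card : ℝ) := by exact_mod_cast hcard
    nlinarith
  -- decompose T
  have hsumT : ∑ p ∈ T, w p = (∑ p ∈ T ∩ B, w p) + ∑ p ∈ T ∩ R, w p := by
    rw [← Finset.sum_union (hBR.mono Finset.inter_subset_right Finset.inter_subset_right)]
    congr 1
    ext x
    simp only [Finset.mem_union, Finset.mem_inter]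
    constructor
    · intro hx
      rcases Finset.mem_union.mp (hT hx) with h | h
      · exact Or.inl ⟨hx, h⟩
      · exact Or.inr ⟨hx, h⟩
    · rintro (⟨h, _⟩ | ⟨h, _⟩) <;> exact h
  have hTRle : ∑ p ∈ T ∩ R, w p ≤ 0 := by
    apply Finset.sum_nonpos
    intro p hp
    rw [hwR p (Finset.mem_inter.mp hp).2]
    exact le_of_lt hδ
  have hTBle : ∑ p ∈ T ∩ B, w p ≤ ∑ p ∈ B.erase b, w p := by
    apply Finset.sum_le_sum_of_subset_of_nonneg
    · intro x hx
      obtain ⟨hxT, hxB⟩ := Finset.mem_inter.mp hx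
      refine Finset.mem_erase.mpr ⟨?_, hxB⟩
      rintro rfl; exact hbT hxT
    · intro p hp _; exact hwBnn p (Finset.mem_of_mem_erase hp)
  have hBsplit : ∑ p ∈ B, w p = w b + ∑ p ∈ B.erase b, w p :=
    (Finset.add_sum_erase B w hbB).symm
  have hb := hwB b hbB
  calc ∑ p ∈ T, w p = (∑ p ∈ T ∩ B, w p) + ∑ p ∈ T ∩ R, w p := hsumT
    _ ≤ ∑ p ∈ B.erase b, w p := by linarith
    _ < ∑ p ∈ S, w p := by rw [hsumS, hBsplit]; nlinarith
end
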